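/- arXiv:2106.06483 — 2 statements merged into one kernel-verified Lean document; each statement's English description precedes it below -/
import Mathlib

section
/- Let (X, μ) be a probability space, A a finite set, p : X → (probability distributions on A) a probability kernel, and f, f* : X × A → [0,1]. Let π : X → A be any policy. Then |E_{x∼μ}[f(x,π(x)) − f*(x,π(x))]| ≤ sqrt(E_{x∼μ}[1/p(π(x)|x)]) · sqrt(E_{x∼μ} E_{a∼p(·|x)}[(f(x,a) − f*(x,a))²]), assuming p(π(x)|x) > 0 for all x. -/
/-!
Write `q x = p(π x | x)` and `g x = f(x, π x) - f*(x, π x)`. Pointwise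
`|g| = √(1/q) · √(q g²)`, so Cauchy–Schwarz gives `|∫ g| ≤ √(∫ 1/q) · √(∫ q g²)`, and `q g²` is
one of the nonnegative terms of `∑ₐ p(a | x) (f - f*)²(x, a)`.
-/

open MeasureTheory

section CauchySchwarz

variable {X : Type*} [MeasurableSpace X] {μ : Measure X}

theorem MeasureTheory.Integrable.memLp_two_sqrt {h : X → ℝ} (hint : Integrable h μ)
    (hnn : 0 ≤ᵐ[μ] h) :
    MemLp (fun x => √(h x)) 2 μ := by
  rw [memLp_two_iff_integrable_sq (Real.continuous_sqrt.comp_aestronglyMeasurable hint.1)]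
  refine hint.congr ?_
  filter_upwards [hnn] with x hx using (Real.sq_sqrt hx).symm

theorem integral_sqrt_mul_sqrt_le {a b : X → ℝ} (ha : Integrable a μ) (hb : Integrable b μ)
    (ha0 : 0 ≤ᵐ[μ] a) (hb0 : 0 ≤ᵐ[μ] b) :
    ∫ x, √(a x) * √(b x) ∂μ ≤ √(∫ x, a x ∂μ) * √(∫ x, b x ∂μ) := by
  have h2 : ENNReal.ofReal 2 = 2 := by norm_num
  have hCS := integral_mul_le_Lp_mul_Lq_of_nonneg Real.HolderConjugate.two_two
    (Filter.Eventually.of_forall fun x => Real.sqrt_nonneg (a x))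
    (Filter.Eventually.of_forall fun x => Real.sqrt_nonneg (b x))
    (h2 ▸ ha.memLp_two_sqrt ha0) (h2 ▸ hb.memLp_two_sqrt hb0)
  have sq_integral {h : X → ℝ} (hnn : 0 ≤ᵐ[μ] h) : ∫ x, √(h x) ^ (2 : ℝ) ∂μ = ∫ x, h x ∂μ :=
    integral_congr_ae <| by
      filter_upwards [hnn] with x hx using by rw [Real.rpow_two, Real.sq_sqrt hx]
  rwa [sq_integral ha0, sq_integral hb0, ← Real.sqrt_eq_rpow, ← Real.sqrt_eq_rpow] at hCS

theorem abs_integral_le_sqrt_integral_inv_mul_sqrt_integral_mul_sq {w g : X → ℝ}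
    (hw : ∀ x, 0 < w x) (hwinv : Integrable (fun x => 1 / w x) μ)
    (hwg : Integrable (fun x => w x * g x ^ 2) μ) :
    |∫ x, g x ∂μ| ≤ √(∫ x, 1 / w x ∂μ) * √(∫ x, w x * g x ^ 2 ∂μ) := by
  have hfactor : ∀ x, √(1 / w x) * √(w x * g x ^ 2) = |g x| := fun x => by
    rw [← Real.sqrt_mul (one_div_nonneg.mpr (hw x).le), ← mul_assoc,
      one_div_mul_cancel (hw x).ne', one_mul, Real.sqrt_sq_eq_abs]
  calc |∫ x, g x ∂μ| ≤ ∫ x, |g x| ∂μ := abs_integral_le_integral_abs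
    _ = ∫ x, √(1 / w x) * √(w x * g x ^ 2) ∂μ := by simp only [hfactor]
    _ ≤ _ := integral_sqrt_mul_sqrt_le hwinv hwg
        (Filter.Eventually.of_forall fun x => one_div_nonneg.mpr (hw x).le)
        (Filter.Eventually.of_forall fun x => mul_nonneg (hw x).le (sq_nonneg (g x)))

end CauchySchwarz

theorem direct_method_error_bound_general
    {X : Type*} [MeasurableSpace X] (μ : Measure X)
    {A : Type*} [Fintype A]
    (p : X → A → ℝ) (hpnn : ∀ x a, 0 ≤ p x a)
    (f fstar : X → A → ℝ)
    (π : X → A)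
    (hppos : ∀ x, 0 < p x (π x))
    (hint1 : Integrable (fun x => f x (π x) - fstar x (π x)) μ)
    (hint2 : Integrable (fun x => 1 / p x (π x)) μ)
    (hint3 : Integrable (fun x => ∑ a, p x a * (f x a - fstar x a) ^ 2) μ) :
    |∫ x, (f x (π x) - fstar x (π x)) ∂μ| ≤
      Real.sqrt (∫ x, 1 / p x (π x) ∂μ) *
        Real.sqrt (∫ x, ∑ a, p x a * (f x a - fstar x a) ^ 2 ∂μ) := by
  have hterm_le (x : X) :
      p x (π x) * (f x (π x) - fstar x (π x)) ^ 2 ≤ ∑ a, p x a * (f x a - fstar x a) ^ 2 :=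
    Finset.single_le_sum (f := fun a => p x a * (f x a - fstar x a) ^ 2)
      (fun a _ => mul_nonneg (hpnn x a) (sq_nonneg _)) (Finset.mem_univ (π x))
  have hp_meas : AEStronglyMeasurable (fun x => p x (π x)) μ := by
    simpa only [Pi.inv_def, one_div, inv_inv] using hint2.1.aemeasurable.inv.aestronglyMeasurable
  have hterm_int : Integrable (fun x => p x (π x) * (f x (π x) - fstar x (π x)) ^ 2) μ :=
    hint3.mono' (hp_meas.mul (hint1.1.pow 2)) <| Filter.Eventually.of_forall fun x => by
      rw [Real.norm_of_nonneg (mul_nonneg (hppos x).le (sq_nonneg _))]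
      exact hterm_le x
  calc _ ≤ √(∫ x, 1 / p x (π x) ∂μ) * √(∫ x, p x (π x) * (f x (π x) - fstar x (π x)) ^ 2 ∂μ) :=
        abs_integral_le_sqrt_integral_inv_mul_sqrt_integral_mul_sq hppos hint2 hterm_int
    _ ≤ _ := by gcongr √?_ * √?_; exact integral_mono hterm_int hint3 hterm_le

/-- Direct-method policy evaluation error bound. -/
theorem direct_method_error_bound
    {X : Type*} [MeasurableSpace X] (μ : Measure X) [IsProbabilityMeasure μ]
    {A : Type*} [Fintype A]
    (p : X → A → ℝ) (hpnn : ∀ x a, 0 ≤ p x a) (hpsum : ∀ x, ∑ a, p x a = 1)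
    (f fstar : X → A → ℝ)
    (hf : ∀ x a, f x a ∈ Set.Icc (0 : ℝ) 1)
    (hfstar : ∀ x a, fstar x a ∈ Set.Icc (0 : ℝ) 1)
    (π : X → A)
    (hppos : ∀ x, 0 < p x (π x))
    (hint1 : Integrable (fun x => f x (π x) - fstar x (π x)) μ)
    (hint2 : Integrable (fun x => 1 / p x (π x)) μ)
    (hint3 : Integrable (fun x => ∑ a, p x a * (f x a - fstar x a) ^ 2) μ) :
    |∫ x, (f x (π x) - fstar x (π x)) ∂μ| ≤
      Real.sqrt (∫ x, 1 / p x (π x) ∂μ) *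
        Real.sqrt (∫ x, ∑ a, p x a * (f x a - fstar x a) ^ 2 ∂μ) :=
  direct_method_error_bound_general μ p hpnn f fstar π hppos hint1 hint2 hint3
end

section
/- Fix real numbers a, b ≥ 1 with a ≥ b (representing γ_{m,1}/γ_{m,i}-type ratios). Define a sequence η_1 = a, and η_{k+1} = 2·max(b, sqrt(1 + b·η_k)) for k ≥ 1. Then for all k ≥ 1, η_k ≤ 8b·a^{1/2^{k−1}}. -/
/-! Each step of the recursion takes a square root of the bound: if `η ≤ 8 b c²` with `b c ≥ 1`,
then `1 + b η ≤ 16 b² c²`, so `2 √(1 + b η) ≤ 8 b c`; with `c = a ^ (1 / 2 ^ k)` the exponent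
of `a` halves. -/

open Real

theorem two_mul_max_le_of_le_mul_sq {b c x : ℝ} (hb : 1 ≤ b) (hc : 1 ≤ c)
    (hx : x ≤ 8 * b * c ^ 2) : 2 * max b √(1 + b * x) ≤ 8 * b * c := by
  have hbc : 1 ≤ b * c := one_le_mul_of_one_le_of_one_le hb hc
  have hsqrt : √(1 + b * x) ≤ 4 * b * c := by
    rw [sqrt_le_left (by positivity)]
    nlinarith [mul_le_mul_of_nonneg_left hx (by positivity : (0 : ℝ) ≤ b)]
  have hb_le : b ≤ 4 * b * c := by nlinarith
  linarith [max_le hb_le hsqrt]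

theorem rpow_one_div_two_pow_succ_sq {a : ℝ} (ha : 0 ≤ a) (n : ℕ) :
    (a ^ ((1 : ℝ) / 2 ^ (n + 1))) ^ 2 = a ^ ((1 : ℝ) / 2 ^ n) := by
  rw [← rpow_natCast, ← rpow_mul ha, pow_succ]
  congr 1
  field_simp
  norm_num

theorem self_correction_recursion_general
    (a b : ℝ) (hb : 1 ≤ b) (ha : 1 ≤ a)
    (η : ℕ → ℝ) (hη1 : η 1 = a)
    (hrec : ∀ k ≥ 1, η (k + 1) = 2 * max b (Real.sqrt (1 + b * η k))) :
    ∀ k ≥ 1, η k ≤ 8 * b * a ^ ((1 : ℝ) / 2 ^ (k - 1)) := by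
  intro k hk
  obtain ⟨n, rfl⟩ : ∃ n, k = n + 1 := ⟨k - 1, by omega⟩
  rw [Nat.add_sub_cancel]
  induction n with
  | zero =>
    rw [hη1, pow_zero, div_one, rpow_one]
    nlinarith
  | succ n ih =>
    rw [hrec _ (by omega)]
    refine two_mul_max_le_of_le_mul_sq hb (one_le_rpow ha (by positivity)) ?_
    rw [rpow_one_div_two_pow_succ_sq (by linarith)]
    exact ih (by omega)

/-- Self-correction recursion decays double-exponentially. -/
theorem self_correction_recursion
    (a b : ℝ) (hb : 1 ≤ b) (hab : b ≤ a) (ha : 1 ≤ a)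
    (η : ℕ → ℝ) (hη1 : η 1 = a)
    (hrec : ∀ k ≥ 1, η (k + 1) = 2 * max b (Real.sqrt (1 + b * η k))) :
    ∀ k ≥ 1, η k ≤ 8 * b * a ^ ((1 : ℝ) / 2 ^ (k - 1)) :=
  self_correction_recursion_general a b hb ha η hη1 hrec
end
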